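/- For every x in (0, π/2), (−59x^6 + 962x^4 − 3675x^2 + 4095)/(17x^4 + 420x^2 + 4095) < cos^2 x. -/

import Mathlib

/-!
Since `cos² x = 1 - sin² x` and `0 ≤ sin x` on `[0, π]`, it suffices to bound `sin x` above by a
polynomial `p` with `p² < 1 - N / D`, where `N / D` is the Padé approximant. Integrating
`cos t ≤ 1` repeatedly from `0` shows that the Taylor polynomials of `sin` and `cos` alternately
over- and underestimate them on `[0, ∞)`; the degree-9 Taylor polynomial of `sin` works as `p`.
-/

open Real Finset
open scoped Nat

namespace Real

noncomputable def sinTaylor (n : ℕ) (x : ℝ) : ℝ :=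
  ∑ k ∈ range n, (-1) ^ k * (x ^ (2 * k + 1) / (2 * k + 1)!)

noncomputable def cosTaylor (n : ℕ) (x : ℝ) : ℝ :=
  ∑ k ∈ range n, (-1) ^ k * (x ^ (2 * k) / (2 * k)!)

lemma hasDerivAt_pow_succ_div_factorial (m : ℕ) (x : ℝ) :
    HasDerivAt (fun t : ℝ ↦ t ^ (m + 1) / (m + 1)!) (x ^ m / m !) x := by
  refine ((hasDerivAt_pow (m + 1) x).div_const _).congr_deriv ?_
  rw [Nat.factorial_succ]
  push_cast
  field_simp

lemma hasDerivAt_sinTaylor (n : ℕ) (x : ℝ) : HasDerivAt (sinTaylor n) (cosTaylor n x) x := by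
  unfold sinTaylor cosTaylor
  exact HasDerivAt.fun_sum fun k _ ↦ (hasDerivAt_pow_succ_div_factorial (2 * k) x).const_mul _

lemma hasDerivAt_cosTaylor_succ (n : ℕ) (x : ℝ) :
    HasDerivAt (cosTaylor (n + 1)) (-sinTaylor n x) x := by
  have h : cosTaylor (n + 1) =
      fun t : ℝ ↦ ∑ k ∈ range n, (-1) ^ (k + 1) * (t ^ (2 * k + 1 + 1) / (2 * k + 1 + 1)!) + 1 := by
    funext t
    simp [cosTaylor, sum_range_succ', mul_add]
  rw [h, sinTaylor, ← sum_neg_distrib]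
  refine (HasDerivAt.fun_sum fun k _ ↦ ?_).add_const 1
  exact ((hasDerivAt_pow_succ_div_factorial (2 * k + 1) x).const_mul _).congr_deriv (by ring)

@[simp] lemma sinTaylor_zero (n : ℕ) : sinTaylor n 0 = 0 := by simp [sinTaylor]

@[simp] lemma cosTaylor_succ_zero (n : ℕ) : cosTaylor (n + 1) 0 = 1 := by
  simp [cosTaylor, sum_range_succ']

end Real

lemma apply_zero_le_of_hasDerivAt_nonneg {f f' : ℝ → ℝ} (hf : ∀ t, HasDerivAt f (f' t) t)
    (hf' : ∀ t, 0 < t → 0 ≤ f' t) {x : ℝ} (hx : 0 ≤ x) : f 0 ≤ f x := by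
  refine monotoneOn_of_hasDerivWithinAt_nonneg (convex_Ici 0)
    (fun t _ ↦ (hf t).continuousAt.continuousWithinAt) (fun t _ ↦ (hf t).hasDerivWithinAt)
    (fun t ht ↦ hf' t ?_) Set.self_mem_Ici hx hx
  simpa using ht

namespace Real

lemma sinTaylor_alternating_of_cosTaylor {n : ℕ}
    (h : ∀ t, 0 ≤ t → 0 ≤ (-1) ^ n * (cosTaylor (n + 1) t - cos t)) {x : ℝ} (hx : 0 ≤ x) :
    0 ≤ (-1) ^ n * (sinTaylor (n + 1) x - sin x) := by
  simpa using apply_zero_le_of_hasDerivAt_nonneg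
    (fun t ↦ ((hasDerivAt_sinTaylor (n + 1) t).sub (hasDerivAt_sin t)).const_mul ((-1) ^ n))
    (fun t ht ↦ h t ht.le) hx

lemma cosTaylor_alternating_of_sinTaylor {n : ℕ}
    (h : ∀ t, 0 ≤ t → 0 ≤ (-1) ^ n * (sinTaylor (n + 1) t - sin t)) {x : ℝ} (hx : 0 ≤ x) :
    0 ≤ (-1) ^ (n + 1) * (cosTaylor (n + 2) x - cos x) := by
  simpa using apply_zero_le_of_hasDerivAt_nonneg
    (fun t ↦ ((hasDerivAt_cosTaylor_succ (n + 1) t).sub (hasDerivAt_cos t)).const_mul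
      ((-1) ^ (n + 1)))
    (fun t ht ↦ by linear_combination h t ht.le) hx

theorem cosTaylor_alternating (n : ℕ) {x : ℝ} (hx : 0 ≤ x) :
    0 ≤ (-1) ^ n * (cosTaylor (n + 1) x - cos x) := by
  induction n generalizing x with
  | zero => simpa [cosTaylor] using cos_le_one x
  | succ n ih =>
    exact cosTaylor_alternating_of_sinTaylor
      (fun _ ht ↦ sinTaylor_alternating_of_cosTaylor (fun _ hs ↦ ih hs) ht) hx

theorem sinTaylor_alternating (n : ℕ) {x : ℝ} (hx : 0 ≤ x) :
    0 ≤ (-1) ^ n * (sinTaylor (n + 1) x - sin x) :=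
  sinTaylor_alternating_of_cosTaylor (fun _ ht ↦ cosTaylor_alternating n ht) hx

lemma sinTaylor_five (x : ℝ) :
    sinTaylor 5 x = x - x ^ 3 / 6 + x ^ 5 / 120 - x ^ 7 / 5040 + x ^ 9 / 362880 := by
  simp [sinTaylor, sum_range_succ, Nat.factorial]
  ring

lemma sin_le_sinTaylor_five {x : ℝ} (hx : 0 ≤ x) : sin x ≤ sinTaylor 5 x := by
  have h := sinTaylor_alternating 4 hx
  norm_num at h
  linarith

end Real

lemma sinTaylor_five_sq_mul_lt {x : ℝ} (hx0 : 0 < x) (hx : x ≤ 2) :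
    sinTaylor 5 x ^ 2 * (17 * x ^ 4 + 420 * x ^ 2 + 4095) <
      59 * x ^ 6 - 945 * x ^ 4 + 4095 * x ^ 2 := by
  set y := x ^ 2 with hy
  have hy0 : 0 < y := by positivity
  have hy4 : y ≤ 4 := by nlinarith
  -- Both `N / D` and `1 - sinTaylor 5 x ^ 2` agree with `cos² x` up to order `x ^ 12`, and the
  -- constant term of the cofactor dominates for `x ^ 2 ≤ 4`.
  have key : 59 * x ^ 6 - 945 * x ^ 4 + 4095 * x ^ 2
      - sinTaylor 5 x ^ 2 * (17 * x ^ 4 + 420 * x ^ 2 + 4095) =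
      y ^ 6 * (1453 / 120960 - 1009 / 1036800 * y + 1763 / 43545600 * y ^ 2
        - 14951 / 14631321600 * y ^ 3 + 169 / 10973491200 * y ^ 4
        - 17 / 131681894400 * y ^ 5) := by
    rw [sinTaylor_five, hy]
    ring
  have hR : 0 < 1453 / 120960 - 1009 / 1036800 * y + 1763 / 43545600 * y ^ 2
      - 14951 / 14631321600 * y ^ 3 + 169 / 10973491200 * y ^ 4
      - 17 / 131681894400 * y ^ 5 := by
    nlinarith [pow_pos hy0 2, pow_pos hy0 3, pow_pos hy0 4, pow_le_pow_left₀ hy0.le hy4 2]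
  linarith [mul_pos (pow_pos hy0 6) hR]

theorem pade_lt_cos_sq (x : ℝ) (hx : 0 < x) (hx2 : x < Real.pi / 2) :
    (-59 * x ^ 6 + 962 * x ^ 4 - 3675 * x ^ 2 + 4095) / (17 * x ^ 4 + 420 * x ^ 2 + 4095) <
      Real.cos x ^ 2 := by
  have hD : 0 < 17 * x ^ 4 + 420 * x ^ 2 + 4095 := by positivity
  have hsin : sin x ^ 2 ≤ sinTaylor 5 x ^ 2 := pow_le_pow_left₀
    (sin_nonneg_of_nonneg_of_le_pi hx.le (by linarith [pi_pos])) (sin_le_sinTaylor_five hx.le) 2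
  have hpoly := sinTaylor_five_sq_mul_lt hx (by linarith [pi_le_four])
  rw [div_lt_iff₀ hD, cos_sq']
  linarith [mul_le_mul_of_nonneg_right hsin hD.le]
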